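/- Let B(z) = C · ∏_{i=1}^n (z − a_i)/(1 − conj(a_i)·z) be a finite Blaschke product with n ≥ 2 such that |B'(z)| > 1 for all z ∈ ℂ with |z| = 1. Then the set {z ∈ ℂ : |z| = 1 and B(z) = z} of fixed points of B on the unit circle is finite and has exactly n − 1 elements, and each such fixed point z satisfies |B'(z)| > 1 (i.e. is repelling). -/

import Mathlib

/-!
On the unit circle a Blaschke factor is `(z - a) / w = z * conj w / w` with `w = 1 - conj a * z`
in the right half-plane, so `B (exp (θ I)) = exp (φ θ I)` for the explicit lift
`φ θ = arg C + ∑ᵢ (θ - 2 arg wᵢ)`. It satisfies `φ (θ + 2π) = φ θ + 2πn`, and `φ'` is a sum of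
Poisson kernels, hence nonnegative, and equals `|B'|` on the circle. The hypothesis thus makes
`g = φ - id` strictly increasing with `g (θ + 2π) = g θ + 2π(n - 1)`. Fixed points are the
`exp (θ I)` with `g θ ∈ 2πℤ`; writing `θₖ = g⁻¹ (2πk)`, one has `θₖ₊ₙ₋₁ = θₖ + 2π`, so
`exp (θₖ I) = exp (θₗ I)` exactly when `k ≡ l [ZMOD n - 1]`.
-/

open Complex ComplexConjugate Function Set
open scoped Real

lemma exp_mul_I_eq_exp_mul_I_iff {x y : ℝ} :
    exp (x * I) = exp (y * I) ↔ ∃ k : ℤ, x = y + k * (2 * π) := by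
  rw [← Circle.exp_eq_exp, ← Circle.coe_exp, ← Circle.coe_exp]
  exact Subtype.ext_iff.symm

lemma conj_div_self {w : ℂ} (hw : w ≠ 0) : conj w / w = exp (↑(-2 * arg w) * I) := by
  have hr : (‖w‖ : ℂ) ≠ 0 := by exact_mod_cast norm_ne_zero_iff.mpr hw
  set t := arg w
  rw [← norm_mul_exp_arg_mul_I w, map_mul, conj_ofReal, ← exp_conj, map_mul, conj_ofReal, conj_I,
    mul_div_mul_left _ _ hr, div_eq_iff (exp_ne_zero _), ← exp_add]
  congr 1
  push_cast
  ring

lemma re_one_add_div_one_sub (u : ℂ) :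
    ((1 + u) / (1 - u)).re = (1 - normSq u) / normSq (1 - u) := by
  rw [div_re, ← add_div]
  congr 1
  simp only [normSq_apply, add_re, sub_re, one_re, add_im, sub_im, one_im]
  ring

lemma hasDerivAt_exp_ofReal_mul_I (θ : ℝ) :
    HasDerivAt (fun t : ℝ => exp (t * I)) (exp (θ * I) * I) θ := by
  simpa using ((hasDerivAt_id θ).ofReal_comp.mul_const I).cexp

section BlaschkeFactor

variable {a : ℂ}

lemma one_sub_conj_mul_mem_slitPlane (ha : ‖a‖ < 1) {z : ℂ} (hz : ‖z‖ ≤ 1) :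
    1 - conj a * z ∈ slitPlane := by
  rw [sub_eq_add_neg]
  apply mem_slitPlane_of_norm_lt_one
  rw [norm_neg, norm_mul, norm_conj]
  exact mul_lt_one_of_nonneg_of_lt_one_left (norm_nonneg a) ha hz

lemma one_sub_conj_mul_ne_zero (ha : ‖a‖ < 1) {z : ℂ} (hz : ‖z‖ ≤ 1) : 1 - conj a * z ≠ 0 :=
  slitPlane_ne_zero (one_sub_conj_mul_mem_slitPlane ha hz)

noncomputable def blaschkeFactorAngle (a : ℂ) (θ : ℝ) : ℝ :=
  θ - 2 * arg (1 - conj a * exp (θ * I))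

lemma blaschkeFactor_exp_mul_I (ha : ‖a‖ < 1) (θ : ℝ) :
    (exp (θ * I) - a) / (1 - conj a * exp (θ * I)) = exp (blaschkeFactorAngle a θ * I) := by
  rw [blaschkeFactorAngle]
  set e := exp (θ * I)
  have he : ‖e‖ = 1 := norm_exp_ofReal_mul_I θ
  have hnum : e - a = e * conj (1 - conj a * e) := by
    have : e * conj e = 1 := by rw [mul_conj, normSq_eq_norm_sq, he]; norm_num
    rw [map_sub, map_one, map_mul, conj_conj]
    linear_combination a * this
  rw [hnum, mul_div_assoc, conj_div_self (one_sub_conj_mul_ne_zero ha he.le), ← exp_add]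
  push_cast
  ring_nf

lemma blaschkeFactorAngle_add_two_pi (a : ℂ) (θ : ℝ) :
    blaschkeFactorAngle a (θ + 2 * π) = blaschkeFactorAngle a θ + 2 * π := by
  have : exp (↑(θ + 2 * π) * I) = exp (θ * I) := by
    push_cast
    rw [add_mul, exp_add, exp_two_pi_mul_I, mul_one]
  rw [blaschkeFactorAngle, blaschkeFactorAngle, this]
  ring

lemma hasDerivAt_blaschkeFactorAngle (ha : ‖a‖ < 1) (θ : ℝ) :
    HasDerivAt (blaschkeFactorAngle a)
      ((1 - normSq a) / normSq (1 - conj a * exp (θ * I))) θ := by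
  set u := conj a * exp (θ * I)
  have hw := one_sub_conj_mul_mem_slitPlane ha (norm_exp_ofReal_mul_I θ).le
  have hlog : HasDerivAt (fun t : ℝ => log (1 - conj a * exp (t * I))) (-(u * I) / (1 - u)) θ := by
    have := ((hasDerivAt_exp_ofReal_mul_I θ).const_mul (conj a)).const_sub 1
    simpa [u, mul_assoc] using this.clog_real hw
  have harg : HasDerivAt (fun t : ℝ => arg (1 - conj a * exp (t * I))) (-(u * I) / (1 - u)).im θ := by
    have := imCLM.hasFDerivAt.comp_hasDerivAt θ hlog
    simp only [Function.comp_def, imCLM_apply, log_im] at this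
    exact this
  have hu : normSq u = normSq a := by
    rw [normSq_mul, normSq_conj, normSq_eq_norm_sq (exp _), norm_exp_ofReal_mul_I, one_pow, mul_one]
  refine ((hasDerivAt_id θ).sub (harg.const_mul 2)).congr_deriv ?_
  -- `1 - 2 Im (-(u I) / (1 - u)) = Re ((1 + u) / (1 - u))`, the Poisson kernel.
  rw [← hu, ← re_one_add_div_one_sub]
  have h1u : 1 - u ≠ 0 := slitPlane_ne_zero hw
  rw [show (1 + u) / (1 - u) = 1 + 2 * (u / (1 - u)) by field_simp; ring,
    show -(u * I) / (1 - u) = -(u / (1 - u)) * I by ring, mul_I_im, neg_re, add_re, one_re,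
    mul_re]
  norm_num

end BlaschkeFactor

section BlaschkeProduct

variable {ι : Type*} [Fintype ι] (a : ι → ℂ) (C : ℂ)

noncomputable def blaschke (z : ℂ) : ℂ :=
  C * ∏ i, (z - a i) / (1 - conj (a i) * z)

noncomputable def blaschkeAngle (θ : ℝ) : ℝ :=
  arg C + ∑ i, blaschkeFactorAngle (a i) θ

variable {a C}

lemma blaschke_exp_mul_I (ha : ∀ i, ‖a i‖ < 1) (hC : ‖C‖ = 1) (θ : ℝ) :
    blaschke a C (exp (θ * I)) = exp (blaschkeAngle a C θ * I) := by
  have hCexp : C = exp (arg C * I) := by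
    simpa [hC] using (norm_mul_exp_arg_mul_I C).symm
  simp_rw [blaschke, blaschkeFactor_exp_mul_I (ha _), blaschkeAngle]
  rw [← exp_sum]
  nth_rw 1 [hCexp]
  rw [← exp_add]
  push_cast
  rw [add_mul, Finset.sum_mul]

lemma blaschkeAngle_add_two_pi (θ : ℝ) :
    blaschkeAngle a C (θ + 2 * π) = blaschkeAngle a C θ + 2 * π * Fintype.card ι := by
  simp only [blaschkeAngle, blaschkeFactorAngle_add_two_pi, Finset.sum_add_distrib,
    Finset.sum_const, Finset.card_univ, nsmul_eq_mul]
  ring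

lemma hasDerivAt_blaschkeAngle (ha : ∀ i, ‖a i‖ < 1) (θ : ℝ) :
    HasDerivAt (blaschkeAngle a C)
      (∑ i, (1 - normSq (a i)) / normSq (1 - conj (a i) * exp (θ * I))) θ :=
  (HasDerivAt.fun_sum fun i _ => hasDerivAt_blaschkeFactorAngle (ha i) θ).const_add _

lemma differentiableAt_blaschke (ha : ∀ i, ‖a i‖ < 1) {z : ℂ} (hz : ‖z‖ ≤ 1) :
    DifferentiableAt ℂ (blaschke a C) z := by
  unfold blaschke
  fun_prop (disch := exact one_sub_conj_mul_ne_zero (ha _) hz)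

end BlaschkeProduct

lemma norm_deriv_eq_abs_of_lift {f : ℂ → ℂ} {φ : ℝ → ℝ} {θ φ' : ℝ}
    (hf : DifferentiableAt ℂ f (exp (θ * I))) (hlift : ∀ t : ℝ, f (exp (t * I)) = exp (φ t * I))
    (hφ : HasDerivAt φ φ' θ) :
    ‖deriv f (exp (θ * I))‖ = |φ'| := by
  have h₁ : HasDerivAt (fun t : ℝ => f (exp (t * I))) (exp (θ * I) * I * deriv f (exp (θ * I))) θ :=
    hf.hasDerivAt.scomp θ (hasDerivAt_exp_ofReal_mul_I θ)
  have h₂ : HasDerivAt (fun t : ℝ => f (exp (t * I))) (exp (φ θ * I) * (φ' * I)) θ := by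
    simp_rw [hlift]
    exact (hφ.ofReal_comp.mul_const I).cexp
  simpa [norm_exp_ofReal_mul_I] using congr_arg norm (h₁.unique h₂)

lemma map_add_int_mul {g : ℝ → ℝ} {p c : ℝ} (h : ∀ x, g (x + p) = g x + c) (x : ℝ) (k : ℤ) :
    g (x + k * p) = g x + k * c := by
  induction k using Int.induction_on with
  | zero => simp
  | succ k ih =>
    push_cast at ih ⊢
    rw [add_one_mul, ← add_assoc, h, ih]
    ring
  | pred k ih =>
    have := h (x + (-(k : ℝ) - 1) * p)
    rw [show x + (-(k : ℝ) - 1) * p + p = x + -(k : ℝ) * p by ring] at this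
    push_cast at ih ⊢
    linarith

lemma surjective_of_map_add {g : ℝ → ℝ} {p c : ℝ} (hg : Continuous g) (hc : 0 < c)
    (h : ∀ x, g (x + p) = g x + c) : Surjective g := by
  intro y
  have hmul (k : ℤ) : g (k * p) = g 0 + k * c := by simpa using map_add_int_mul h 0 k
  refine mem_range_of_exists_le_of_exists_ge hg ⟨⌊(y - g 0) / c⌋ * p, ?_⟩
    ⟨⌈(y - g 0) / c⌉ * p, ?_⟩
  · have := Int.floor_le ((y - g 0) / c)
    rw [le_div_iff₀ hc] at this
    linarith [hmul ⌊(y - g 0) / c⌋]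
  · have := Int.le_ceil ((y - g 0) / c)
    rw [div_le_iff₀ hc] at this
    linarith [hmul ⌈(y - g 0) / c⌉]

lemma ncard_range_of_modEq {α : Type*} {F : ℤ → α} {m : ℕ} [NeZero m]
    (hF : ∀ k l, F k = F l ↔ k ≡ l [ZMOD m]) : (range F).ncard = m := by
  set G : ZMod m → α := fun x => F x.val
  have hFG : F = G ∘ Int.cast := by
    funext k
    refine (hF _ _).2 ?_
    rw [← ZMod.intCast_eq_intCast_iff]
    simp
  have hG : Injective G := by
    intro x y hxy
    simpa using (ZMod.intCast_eq_intCast_iff _ _ _).2 ((hF _ _).1 hxy)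
  rw [hFG, ZMod.intCast_surjective.range_comp, ncard_range_of_injective hG, Nat.card_zmod]

lemma exists_enumeration_of_map_add {g : ℝ → ℝ} {p : ℝ} {m : ℕ} (hg : Continuous g)
    (hmono : StrictMono g) (hp : 0 < p) (hm : m ≠ 0) (h : ∀ x, g (x + p) = g x + p * m) :
    ∃ θ : ℤ → ℝ, Injective θ ∧ (∀ k t, θ k = t ↔ g t = p * k) ∧
      ∀ k j, θ (k + m * j) = θ k + j * p := by
  have hsurj := surjective_of_map_add hg (mul_pos hp (by exact_mod_cast Nat.pos_of_ne_zero hm)) h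
  set θ : ℤ → ℝ := fun k => surjInv hsurj (p * k)
  have hgθ (k : ℤ) : g (θ k) = p * k := surjInv_eq hsurj _
  refine ⟨θ, fun k l hkl => ?_, fun k t => ?_, fun k j => hmono.injective ?_⟩
  · simpa [hgθ, hp.ne'] using congrArg g hkl
  · rw [← hmono.injective.eq_iff, hgθ, eq_comm]
  · rw [hgθ, map_add_int_mul h, hgθ]
    push_cast
    ring

theorem finite_and_ncard_fixedPoints_on_circle {f : ℂ → ℂ} {φ : ℝ → ℝ} {d : ℕ}
    (hlift : ∀ θ : ℝ, f (exp (θ * I)) = exp (φ θ * I)) (hφ : Continuous φ)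
    (hdeg : ∀ θ, φ (θ + 2 * π) = φ θ + 2 * π * d) (hmono : StrictMono fun θ => φ θ - θ) :
    {z : ℂ | ‖z‖ = 1 ∧ f z = z}.Finite ∧ {z : ℂ | ‖z‖ = 1 ∧ f z = z}.ncard = d - 1 := by
  have hg (θ : ℝ) : φ (θ + 2 * π) - (θ + 2 * π) = φ θ - θ + 2 * π * (d - 1 : ℝ) := by
    rw [hdeg]
    ring
  have hd : 1 < d := by
    have := hmono (lt_add_of_pos_right 0 Real.two_pi_pos)
    simp only [hg] at this
    exact_mod_cast (by nlinarith [Real.two_pi_pos] : (1 : ℝ) < d)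
  obtain ⟨m, rfl⟩ : ∃ m, d = m + 1 := ⟨d - 1, by omega⟩
  have : NeZero m := ⟨by omega⟩
  obtain ⟨θ, hθ, hθg, hshift⟩ := exists_enumeration_of_map_add (by fun_prop) hmono
    Real.two_pi_pos (NeZero.ne m) (by simpa using hg)
  have hfixed (t : ℝ) : f (exp (t * I)) = exp (t * I) ↔ ∃ k, θ k = t := by
    rw [hlift, exp_mul_I_eq_exp_mul_I_iff]
    refine exists_congr fun k => ?_
    rw [hθg]
    constructor <;> intro h <;> linarith
  have hset : {z : ℂ | ‖z‖ = 1 ∧ f z = z} = range fun k => exp (θ k * I) := by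
    ext z
    constructor
    · rintro ⟨hz, hfz⟩
      have hpolar : exp (arg z * I) = z := by simpa [hz] using norm_mul_exp_arg_mul_I z
      rw [← hpolar] at hfz ⊢
      obtain ⟨k, hk⟩ := (hfixed _).1 hfz
      exact ⟨k, by simp only [hk]⟩
    · rintro ⟨k, rfl⟩
      exact ⟨norm_exp_ofReal_mul_I _, (hfixed _).2 ⟨k, rfl⟩⟩
  have hmod (k l : ℤ) : exp (θ k * I) = exp (θ l * I) ↔ k ≡ l [ZMOD m] := by
    rw [exp_mul_I_eq_exp_mul_I_iff, Int.modEq_comm, Int.modEq_iff_add_fac]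
    refine exists_congr fun j => ?_
    rw [← hshift, hθ.eq_iff]
  have hcard := ncard_range_of_modEq hmod
  rw [hset]
  exact ⟨finite_of_ncard_ne_zero (hcard ▸ NeZero.ne m), by simpa using hcard⟩

theorem stmt_10_general (n : ℕ) (a : Fin n → ℂ) (ha : ∀ i, ‖a i‖ < 1)
    (C : ℂ) (hC : ‖C‖ = 1)
    (B : ℂ → ℂ)
    (hB : ∀ w : ℂ, B w = C * ∏ i, (w - a i) / (1 - (starRingEnd ℂ) (a i) * w))
    (hexp : ∀ z : ℂ, ‖z‖ = 1 → 1 < ‖deriv B z‖) :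
    {z : ℂ | ‖z‖ = 1 ∧ B z = z}.Finite ∧
    {z : ℂ | ‖z‖ = 1 ∧ B z = z}.ncard = n - 1 ∧
    ∀ z : ℂ, ‖z‖ = 1 → B z = z → 1 < ‖deriv B z‖ := by
  obtain rfl : B = blaschke a C := funext hB
  set D := fun θ : ℝ => ∑ i, (1 - normSq (a i)) / normSq (1 - conj (a i) * exp (θ * I))
  have hlift := blaschke_exp_mul_I ha hC
  have hderiv : ∀ θ, HasDerivAt (blaschkeAngle a C) (D θ) θ := hasDerivAt_blaschkeAngle ha
  have hD (θ : ℝ) : 1 < D θ := by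
    have hD₀ : 0 ≤ D θ := Finset.sum_nonneg fun i _ => div_nonneg
      (by rw [normSq_eq_norm_sq]; nlinarith [norm_nonneg (a i), ha i]) (normSq_nonneg _)
    have hcircle := norm_exp_ofReal_mul_I θ
    have := hexp _ hcircle
    rwa [norm_deriv_eq_abs_of_lift (differentiableAt_blaschke ha hcircle.le) hlift (hderiv θ),
      abs_of_nonneg hD₀] at this
  have hmono : StrictMono fun θ => blaschkeAngle a C θ - θ :=
    strictMono_of_hasDerivAt_pos (fun θ => (hderiv θ).sub (hasDerivAt_id θ))
      fun θ => sub_pos.2 (hD θ)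
  obtain ⟨hfin, hcard⟩ := finite_and_ncard_fixedPoints_on_circle hlift
    (continuous_iff_continuousAt.2 fun θ => (hderiv θ).continuousAt)
    (by simpa using blaschkeAngle_add_two_pi (a := a) (C := C)) hmono
  exact ⟨hfin, by simpa using hcard, fun z hz _ => hexp z hz⟩

theorem stmt_10 (n : ℕ) (hn : 2 ≤ n) (a : Fin n → ℂ) (ha : ∀ i, ‖a i‖ < 1)
    (C : ℂ) (hC : ‖C‖ = 1)
    (B : ℂ → ℂ)
    (hB : ∀ w : ℂ, B w = C * ∏ i, (w - a i) / (1 - (starRingEnd ℂ) (a i) * w))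
    (hexp : ∀ z : ℂ, ‖z‖ = 1 → 1 < ‖deriv B z‖) :
    {z : ℂ | ‖z‖ = 1 ∧ B z = z}.Finite ∧
    {z : ℂ | ‖z‖ = 1 ∧ B z = z}.ncard = n - 1 ∧
    ∀ z : ℂ, ‖z‖ = 1 → B z = z → 1 < ‖deriv B z‖ :=
  stmt_10_general n a ha C hC B hB hexp
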